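/- arXiv:2211.12372 — 10 statements merged into one kernel-verified Lean document; each statement's English description precedes it below -/
import Mathlib

section
/- Every piecewise syndetic subset of a commutative semigroup (S,+) is a J-set. -/
/-- Sum of `f` over a nonempty finite set `α` in a commutative semigroup. -/
def sgSum {ι S : Type*} [LinearOrder ι] [AddCommSemigroup S]
    (α : Finset ι) (f : ι → S) (h : α.Nonempty) : S :=
  ((α.erase (α.min' h)).sort (· ≤ ·)).foldl (fun x i => x + f i) (f (α.min' h))

/-- `A` is a J-set: for every finite set of sequences there are `a` and a
nonempty finite `H ⊆ ℕ` with `a + ∑_{n ∈ H} f n ∈ A` for each `f`. -/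
def JSet {S : Type*} [AddCommSemigroup S] (A : Set S) : Prop :=
  ∀ F : Finset (ℕ → S), ∃ (a : S) (H : Finset ℕ) (hH : H.Nonempty),
    ∀ f ∈ F, a + sgSum H f hH ∈ A

/-- `A` is thick: every finite set can be shifted into `A`. -/
def Thick {S : Type*} [AddCommSemigroup S] (A : Set S) : Prop :=
  ∀ E : Finset S, ∃ x : S, ∀ e ∈ E, e + x ∈ A

/-- `A` is syndetic: finitely many shifts `-t + A` cover `S`. -/
def Syndetic {S : Type*} [AddCommSemigroup S] (A : Set S) : Prop :=
  ∃ F : Finset S, ∀ x : S, ∃ t ∈ F, t + x ∈ A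

/-- `A` is piecewise syndetic: finitely many shifts `-t + A` form a thick set. -/
def PiecewiseSyndetic {S : Type*} [AddCommSemigroup S] (A : Set S) : Prop :=
  ∃ F : Finset S, Thick {x : S | ∃ t ∈ F, t + x ∈ A}

/-- `A` is a combinatorially rich (CR) set. -/
def CRSet {S : Type*} [AddCommSemigroup S] (A : Set S) : Prop :=
  ∀ n : ℕ, ∃ r : ℕ, ∀ M : Fin r → Fin n → S,
    ∃ (α : Finset (Fin r)) (hα : α.Nonempty) (s : S),
      ∀ j : Fin n, s + sgSum α (fun i => M i j) hα ∈ A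

/-- `iterAdd a b k = a + b + ⋯ + b` (`k` copies of `b`). -/
def iterAdd {S : Type*} [AddSemigroup S] (a b : S) : ℕ → S
  | 0 => a
  | k + 1 => iterAdd a b k + b

/- Let `B = ⋃_{t ∈ G} (-t + A)` be thick and let `F` be a finite set of sequences.
Apply the Hales–Jewett theorem with alphabet `F` and colour set `G`, for words `w : ι → F` indexed by
a finite `ι ⊆ ℕ`. Thickness gives one `x` with `∑ᵢ wᵢ(i) + x ∈ B` for every word `w`; colour `w`
by a `t ∈ G` with `t + ∑ᵢ wᵢ(i) + x ∈ A`. Along a monochromatic line `f ↦ l f` the sum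
`∑ᵢ (l f)ᵢ(i)` is `∑_{i ∈ H} f(i)` plus a constant, where `H` is the (nonempty) set of moving
coordinates; the constant is absorbed into `a`. Sums are computed in `WithZero S`, since the
constant part may be empty. -/

namespace WithZero

variable {S : Type*} [AddCommSemigroup S]

theorem exists_coe_eq_coe_add (s : S) (c : WithZero S) : ∃ a : S, (a : WithZero S) = s + c := by
  induction c using WithZero.recZeroCoe with
  | zero => exact ⟨s, (add_zero _).symm⟩
  | coe c => exact ⟨s + c, WithZero.coe_add s c⟩

theorem coe_foldl_add {ι : Type*} (f : ι → S) (L : List ι) (x : S) :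
    ((L.foldl (fun x i => x + f i) x : S) : WithZero S)
      = x + (L.map fun i => (f i : WithZero S)).sum := by
  induction L generalizing x with
  | nil => simp
  | cons a L ih =>
    simp only [List.foldl_cons, List.map_cons, List.sum_cons, ih, WithZero.coe_add, add_assoc]

theorem coe_sgSum {ι : Type*} [LinearOrder ι] (α : Finset ι) (f : ι → S) (h : α.Nonempty) :
    ((sgSum α f h : S) : WithZero S) = ∑ i ∈ α, (f i : WithZero S) := by
  rw [sgSum, coe_foldl_add, ← Finset.add_sum_erase _ _ (α.min'_mem h), Finset.sum_eq_multiset_sum,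
    ← Finset.sort_eq (α.erase (α.min' h)) (· ≤ ·), Multiset.map_coe, Multiset.sum_coe]

end WithZero

theorem Thick.exists_add_coe_mem_image_coe {S : Type*} [AddCommSemigroup S] {B : Set S}
    (hB : Thick B) (E : Finset (WithZero S)) :
    ∃ x : S, ∀ e ∈ E, e + x ∈ ((↑) : S → WithZero S) '' B := by
  classical
  obtain ⟨s, -⟩ := hB ∅
  choose v hv using fun e : WithZero S => WithZero.exists_coe_eq_coe_add s e
  obtain ⟨x, hx⟩ := hB (E.image v)
  refine ⟨s + x, fun e he => ⟨v e + x, hx _ (Finset.mem_image_of_mem v he), ?_⟩⟩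
  rw [WithZero.coe_add, hv, WithZero.coe_add]
  abel

theorem Thick.exists_shift_add_coe_mem {S : Type*} [AddCommSemigroup S] {A : Set S} {G : Finset S}
    (hG : Thick {x : S | ∃ t ∈ G, t + x ∈ A}) (E : Finset (WithZero S)) :
    ∃ x : S, ∀ e ∈ E, ∃ t : G, (t : WithZero S) + (e + x) ∈ ((↑) : S → WithZero S) '' A := by
  obtain ⟨x, hx⟩ := hG.exists_add_coe_mem_image_coe E
  refine ⟨x, fun e he => ?_⟩
  obtain ⟨b, ⟨t, ht, hb⟩, hbe⟩ := hx e he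
  exact ⟨⟨t, ht⟩, t + b, hb, by rw [WithZero.coe_add, hbe]⟩

theorem Combinatorics.Line.sum_apply {α ι M : Type*} [Fintype ι] [AddCommMonoid M]
    (l : Line α ι) (v : ι → α → M) (x : α) :
    ∑ i, v i (l x i)
      = ∑ i with l.idxFun i = none, v i x + ∑ i, (l.idxFun i).elim 0 (v i) := by
  rw [Finset.sum_filter, ← Finset.sum_add_distrib]
  refine Finset.sum_congr rfl fun i _ => ?_
  cases h : l.idxFun i <;> simp [h]

/-- Every piecewise syndetic subset of a commutative semigroup is a J-set. -/
theorem piecewiseSyndetic_isJSet {S : Type*} [AddCommSemigroup S] (A : Set S)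
    (hA : PiecewiseSyndetic A) : JSet A := by
  classical
  obtain ⟨G, hG⟩ := hA
  intro F
  obtain ⟨ι, _, hHJ⟩ := Combinatorics.Line.exists_mono_in_high_dimension F G
  let emb : ι ↪ ℕ := (Fintype.equivFin ι).toEmbedding.trans Fin.valEmbedding
  let value : (ι → F) → WithZero S := fun w => ∑ i, ((w i : ℕ → S) (emb i) : WithZero S)
  obtain ⟨x, hx⟩ := hG.exists_shift_add_coe_mem (Finset.univ.image value)
  choose C hC using fun w => hx (value w) (Finset.mem_image_of_mem _ (Finset.mem_univ w))
  obtain ⟨l, t, hl⟩ := hHJ C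
  set moving : Finset ι := {i | l.idxFun i = none}
  have hmoving : moving.Nonempty := l.proper.imp fun i hi => by simp [moving, hi]
  obtain ⟨a, ha⟩ := WithZero.exists_coe_eq_coe_add (t + x)
    (∑ i, (l.idxFun i).elim 0 fun g : F => ((g : ℕ → S) (emb i) : WithZero S))
  refine ⟨a, moving.map emb, hmoving.map, fun f hf => ?_⟩
  have hmem := hC (l ⟨f, hf⟩)
  dsimp only [value] at hmem
  rw [hl, Combinatorics.Line.sum_apply l (fun i (g : F) => ((g : ℕ → S) (emb i) : WithZero S))]
    at hmem
  rw [← WithZero.coe_injective.mem_set_image, WithZero.coe_add, WithZero.coe_sgSum,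
    Finset.sum_map, ha, WithZero.coe_add]
  convert hmem using 1
  abel
end

section
/- Every CR-set in a commutative semigroup (S,+) is a J-set. -/
/-!
Given finitely many sequences `f₁, …, fₙ`, apply the CR property to the `r × n` matrix whose
`j`-th column is the first `r` terms of `fⱼ`. A nonempty set of rows `α ⊆ {0, …, r - 1}` and a
shift `s` with `s + ∑_{i ∈ α} fⱼ i ∈ A` for all `j` is then exactly the `J`-set witness, with
`H = α` viewed as a subset of `ℕ`.
-/

section

variable {S : Type*} [AddCommSemigroup S]

theorem Finset.min'_map_orderEmbedding {ι κ : Type*} [LinearOrder ι] [LinearOrder κ]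
    (e : ι ↪o κ) (α : Finset ι) (h : α.Nonempty) (h' : (α.map e.toEmbedding).Nonempty) :
    (α.map e.toEmbedding).min' h' = e (α.min' h) := by
  simp only [Finset.map_eq_image, RelEmbedding.coe_toEmbedding]
  exact Finset.min'_image e.monotone α _

theorem sgSum_map_orderEmbedding {ι κ : Type*} [LinearOrder ι] [LinearOrder κ]
    (e : ι ↪o κ) (α : Finset ι) (h : α.Nonempty) (h' : (α.map e.toEmbedding).Nonempty)
    (f : κ → S) :
    sgSum (α.map e.toEmbedding) f h' = sgSum α (f ∘ e) h := by
  unfold sgSum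
  rw [Finset.min'_map_orderEmbedding e α h h', ← RelEmbedding.coe_toEmbedding,
    ← Finset.map_erase, ← (e.strictMono.strictMonoOn _).map_finsetSort, List.foldl_map]
  rfl

theorem CRSet.exists_add_sgSum_mem {A : Set S} (hA : CRSet A) {ι : Type*} [Fintype ι]
    (f : ι → ℕ → S) :
    ∃ (a : S) (H : Finset ℕ) (hH : H.Nonempty), ∀ j, a + sgSum H (f j) hH ∈ A := by
  let e := Fintype.equivFin ι
  obtain ⟨r, hr⟩ := hA (Fintype.card ι)
  obtain ⟨α, hα, s, hs⟩ := hr fun i j => f (e.symm j) i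
  refine ⟨s, α.map (Fin.valOrderEmb r).toEmbedding, hα.map, fun j => ?_⟩
  rw [sgSum_map_orderEmbedding]
  simpa [Function.comp_def] using hs (e j)

end

/-- Every CR-set in a commutative semigroup is a J-set. -/
theorem cRSet_isJSet {S : Type*} [AddCommSemigroup S] (A : Set S)
    (hA : CRSet A) : JSet A := by
  intro F
  obtain ⟨a, H, hH, hmem⟩ := hA.exists_add_sgSum_mem fun f : F => (f : ℕ → S)
  exact ⟨a, H, hH, fun f hf => hmem ⟨f, hf⟩⟩
end

section
/- Every piecewise syndetic subset of a commutative semigroup (S,+) is a CR-set. -/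
private lemma foldl_coe_withZero {ι S : Type*} [AddSemigroup S] (f : ι → S) :
    ∀ (l : List ι) (a : S),
      ((l.foldl (fun x i => x + f i) a : S) : WithZero S)
        = (a : WithZero S) + (l.map (fun i => ((f i : WithZero S)))).sum := by
  intro l
  induction l with
  | nil => intro a; simp
  | cons i l ih =>
      intro a
      simp only [List.foldl_cons, List.map_cons, List.sum_cons, ih (a + f i),
        WithZero.coe_add, add_assoc]

/-- Coercion of `sgSum` to `WithZero S` is the usual finite sum. -/
lemma sgSum_coe {ι S : Type*} [LinearOrder ι] [AddCommSemigroup S]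
    (α : Finset ι) (f : ι → S) (h : α.Nonempty) :
    ((sgSum α f h : S) : WithZero S) = ∑ i ∈ α, (f i : WithZero S) := by
  classical
  unfold sgSum
  rw [foldl_coe_withZero]
  have hperm : List.Perm
      (((α.erase (α.min' h)).sort (· ≤ ·)).map (fun i => ((f i : WithZero S))))
      (((α.erase (α.min' h)).toList).map (fun i => ((f i : WithZero S)))) :=
    (Finset.sort_perm_toList _ _).map _
  rw [hperm.sum_eq, Finset.sum_map_toList]
  exact Finset.add_sum_erase α (fun i => ((f i : S) : WithZero S)) (α.min'_mem h)

/-- Hales–Jewett over `Fin r`. -/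
lemma hjFin (n : ℕ) (κ : Type*) [Finite κ] [Nonempty κ] :
    ∃ r : ℕ, 0 < r ∧ ∀ C : (Fin r → Fin n) → κ,
      ∃ l : Combinatorics.Line (Fin n) (Fin r), l.IsMono C := by
  obtain ⟨ι, ιfin, hι⟩ := Combinatorics.Line.exists_mono_in_high_dimension (Fin n) κ
  refine ⟨Fintype.card ι, ?_, ?_⟩
  · obtain ⟨l, -⟩ := hι (fun _ => Classical.arbitrary κ)
    obtain ⟨i, -⟩ := l.proper
    exact Fintype.card_pos_iff.mpr ⟨i⟩
  · intro C
    set e : Fin (Fintype.card ι) ≃ ι := (Fintype.equivFin ι).symm with he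
    obtain ⟨l', c, hc⟩ := hι (fun w => C (w ∘ e))
    have hproper : ∃ i, (l'.idxFun ∘ e) i = none := by
      obtain ⟨i, hi⟩ := l'.proper
      exact ⟨e.symm i, by simp [Function.comp, hi]⟩
    exact ⟨⟨l'.idxFun ∘ e, hproper⟩, c, fun x => hc x⟩

/-- Every piecewise syndetic subset of a commutative semigroup is a CR-set. -/
theorem piecewiseSyndetic_isCRSet {S : Type*} [AddCommSemigroup S] (A : Set S)
    (hA : PiecewiseSyndetic A) : CRSet A := by
  classical
  obtain ⟨F, hF⟩ := hA
  -- S is nonempty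
  obtain ⟨x₀, -⟩ := hF ∅
  intro n
  match n with
  | 0 =>
    exact ⟨1, fun M => ⟨{0}, ⟨0, Finset.mem_singleton_self 0⟩, x₀, fun j => j.elim0⟩⟩
  | n + 1 =>
    -- F is nonempty
    have hFne : F.Nonempty := by
      obtain ⟨x, hx⟩ := hF {x₀}
      obtain ⟨t, ht, -⟩ := hx x₀ (Finset.mem_singleton_self x₀)
      exact ⟨t, ht⟩
    haveI : Nonempty {t // t ∈ F} := ⟨⟨hFne.choose, hFne.choose_spec⟩⟩
    obtain ⟨r, hr0, hHJ⟩ := hjFin (n + 1) {t // t ∈ F}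
    refine ⟨r, fun M => ?_⟩
    have hune : (Finset.univ : Finset (Fin r)).Nonempty := ⟨⟨0, hr0⟩, Finset.mem_univ _⟩
    set σ : (Fin r → Fin (n + 1)) → S :=
      fun w => sgSum Finset.univ (fun i => M i (w i)) hune with hσ
    obtain ⟨x, hx⟩ := hF (Finset.image σ Finset.univ)
    have hw : ∀ w : Fin r → Fin (n + 1), ∃ t : {t // t ∈ F}, (t : S) + (σ w + x) ∈ A := by
      intro w
      obtain ⟨t, htF, ht⟩ := hx (σ w) (Finset.mem_image_of_mem σ (Finset.mem_univ w))
      exact ⟨⟨t, htF⟩, ht⟩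
    set C : (Fin r → Fin (n + 1)) → {t // t ∈ F} := fun w => (hw w).choose with hCdef
    have hC : ∀ w, ((C w : S)) + (σ w + x) ∈ A := fun w => (hw w).choose_spec
    obtain ⟨l, c, hc⟩ := hHJ C
    have hmem : ∀ j : Fin (n + 1), (c : S) + (σ (l j) + x) ∈ A := by
      intro j
      have := hC (l j)
      rwa [hc j] at this
    set α : Finset (Fin r) := Finset.univ.filter (fun i => l.idxFun i = none) with hαdef
    set β : Finset (Fin r) := Finset.univ.filter (fun i => ¬ l.idxFun i = none) with hβdef
    have hα : α.Nonempty := by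
      obtain ⟨i, hi⟩ := l.proper
      exact ⟨i, Finset.mem_filter.mpr ⟨Finset.mem_univ i, hi⟩⟩
    -- the key splitting identity, in WithZero S
    have key : ∀ j : Fin (n + 1),
        ((σ (l j) : S) : WithZero S)
          = ((sgSum α (fun i => M i j) hα : S) : WithZero S)
              + ∑ i ∈ β, ((M i ((l 0) i) : S) : WithZero S) := by
      intro j
      rw [hσ, sgSum_coe, sgSum_coe,
        ← Finset.sum_filter_add_sum_filter_not Finset.univ (fun i => l.idxFun i = none)]
      congr 1
      · refine Finset.sum_congr rfl fun i hi => ?_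
        have hnone : l.idxFun i = none := (Finset.mem_filter.mp hi).2
        have : (l j) i = j := by
          show (l.idxFun i).getD j = j
          rw [hnone]; rfl
        rw [this]
      · refine Finset.sum_congr rfl fun i hi => ?_
        have hne : ¬ l.idxFun i = none := (Finset.mem_filter.mp hi).2
        obtain ⟨a, ha⟩ := Option.ne_none_iff_exists'.mp hne
        have h1 : (l j) i = a := by show (l.idxFun i).getD j = a; rw [ha]; rfl
        have h2 : (l 0) i = a := by show (l.idxFun i).getD 0 = a; rw [ha]; rfl
        rw [h1, h2]
    by_cases hβ : β.Nonempty
    · refine ⟨α, hα, c + x + sgSum β (fun i => M i ((l 0) i)) hβ, fun j => ?_⟩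
      have heq : (c : S) + x + sgSum β (fun i => M i ((l 0) i)) hβ
            + sgSum α (fun i => M i j) hα = (c : S) + (σ (l j) + x) := by
        apply WithZero.coe_inj.mp
        push_cast [WithZero.coe_add, sgSum_coe, key j]
        rw [← sgSum_coe β (fun i => M i ((l 0) i)) hβ]
        abel
      rw [heq]
      exact hmem j
    · rw [Finset.not_nonempty_iff_eq_empty] at hβ
      refine ⟨α, hα, c + x, fun j => ?_⟩
      have heq : (c : S) + x + sgSum α (fun i => M i j) hα = (c : S) + (σ (l j) + x) := by
        apply WithZero.coe_inj.mp
        push_cast [WithZero.coe_add, sgSum_coe, key j, hβ]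
        abel
      rw [heq]
      exact hmem j
end

section
/- The class of CR-sets in a commutative semigroup is partition regular: if A is a CR-set and A = A₁ ∪ A₂, then A₁ is a CR-set or A₂ is a CR-set. -/
namespace CRaux

variable {S : Type*} [AddCommSemigroup S]

instance : Zero (Option S) := ⟨none⟩

instance : Add (Option S) :=
  ⟨fun x y => match x, y with
    | none, y => y
    | some a, none => some a
    | some a, some b => some (a + b)⟩

instance : AddCommMonoid (Option S) where
  add_assoc := by rintro (_|a) (_|b) (_|c) <;> try rfl
                  exact congrArg some (add_assoc a b c)
  zero_add := by rintro (_|a) <;> rfl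
  add_zero := by rintro (_|a) <;> rfl
  add_comm := by rintro (_|a) (_|b) <;> try rfl
                 exact congrArg some (add_comm a b)
  nsmul := nsmulRec

def toO (s : S) : Option S := some s

lemma toO_add (a b : S) : toO (a + b) = toO a + toO b := rfl

omit [AddCommSemigroup S] in
lemma toO_inj {a b : S} (h : toO a = toO b) : a = b := Option.some.inj h

lemma exists_toO_add (x : S) (t : Option S) : ∃ y : S, toO x + t = toO y := by
  cases t with
  | none => exact ⟨x, rfl⟩
  | some a => exact ⟨x + a, rfl⟩

lemma foldl_toO {ι : Type*} (f : ι → S) (l : List ι) (a : S) :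
    toO (l.foldl (fun x i => x + f i) a) = toO a + (l.map fun i => toO (f i)).sum := by
  induction l generalizing a with
  | nil => simp
  | cons i l ih =>
      simp only [List.foldl_cons, List.map_cons, List.sum_cons]
      rw [ih, toO_add, add_assoc]

lemma toO_sgSum {ι : Type*} [LinearOrder ι] (α : Finset ι) (h : α.Nonempty) (f : ι → S) :
    toO (sgSum α f h) = ∑ i ∈ α, toO (f i) := by
  unfold sgSum
  rw [foldl_toO]
  have h1 : (((α.erase (α.min' h)).sort (· ≤ ·)).map fun i => toO (f i)).sum
      = ∑ i ∈ α.erase (α.min' h), toO (f i) := by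
    have h2 : ((((α.erase (α.min' h)).sort (· ≤ ·)) : Multiset ι).map
        fun i => toO (f i)).sum = ∑ i ∈ α.erase (α.min' h), toO (f i) := by
      rw [Finset.sort_eq]
      rfl
    rw [← h2, Multiset.map_coe, Multiset.sum_coe]
  rw [h1]
  exact Finset.add_sum_erase α (fun i => toO (f i)) (α.min'_mem h)

end CRaux

open CRaux

/-- CR-sets are partition regular. -/
theorem cRSet_partition_regular {S : Type*} [AddCommSemigroup S]
    (A A₁ A₂ : Set S) (hA : CRSet A) (hunion : A = A₁ ∪ A₂) :
    CRSet A₁ ∨ CRSet A₂ := by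
  classical
  by_cases h₂ : CRSet A₂
  · exact Or.inr h₂
  left
  unfold CRSet at h₂
  push_neg at h₂
  obtain ⟨n₂, hbad⟩ := h₂
  -- S is nonempty
  obtain ⟨r₀, hr₀⟩ := hA 0
  obtain ⟨α₀, hα₀, s₀, -⟩ := hr₀ (fun _ j => j.elim0)
  -- Fin n₂ is nonempty
  obtain ⟨B₁, hB₁⟩ := hbad 1
  obtain ⟨k₀, -⟩ := hB₁ {0} ⟨0, Finset.mem_singleton_self 0⟩ s₀
  intro n₁
  obtain ⟨ι, ιFin, hHJ⟩ :=
    Combinatorics.Line.exists_mono_in_high_dimension (Fin n₂) (Finset (Fin n₁))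
  obtain ⟨R, hR⟩ := hA (Fintype.card (Fin n₁ × (ι → Fin n₂)))
  refine ⟨R, fun Q => ?_⟩
  set eN := (Fintype.equivFin (Fin n₁ × (ι → Fin n₂))).symm with heN
  set eρ := Fintype.equivFin (ι × Fin R) with heρ
  obtain ⟨C, hC⟩ := hbad (Fintype.card (ι × Fin R))
  set Mc : Fin R → Fin (Fintype.card (Fin n₁ × (ι → Fin n₂))) → S := fun i c =>
    (toO (Q i (eN c).1) + ∑ ℓ : ι, toO (C (eρ (ℓ, i)) ((eN c).2 ℓ))).getD s₀ with hMc
  have entry : ∀ i c, toO (Mc i c)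
      = toO (Q i (eN c).1) + ∑ ℓ : ι, toO (C (eρ (ℓ, i)) ((eN c).2 ℓ)) := by
    intro i c
    obtain ⟨y, hy⟩ := exists_toO_add (Q i (eN c).1)
      (∑ ℓ : ι, toO (C (eρ (ℓ, i)) ((eN c).2 ℓ)))
    rw [hy]
    have : Mc i c = y := by
      simp only [hMc]
      rw [hy]
      rfl
    rw [this]
  obtain ⟨α, hα, s, hs⟩ := hR Mc
  obtain ⟨l, σ₀, hσ⟩ := hHJ (fun w => Finset.univ.filter
    fun j => s + sgSum α (fun i => Mc i (eN.symm (j, w))) hα ∈ A₁)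
  set β : Finset ι := Finset.univ.filter (fun ℓ => l.idxFun ℓ = none) with hβdef
  have hβ : β.Nonempty := by
    obtain ⟨ℓ₀, h0⟩ := l.proper
    exact ⟨ℓ₀, by simp [hβdef, h0]⟩
  set γ : Finset (Fin (Fintype.card (ι × Fin R))) := (β ×ˢ α).image eρ with hγdef
  have hγ : γ.Nonempty := (hβ.product hα).image _
  have hγsum : ∀ k, toO (sgSum γ (fun i => C i k) hγ)
      = ∑ ℓ ∈ β, ∑ i ∈ α, toO (C (eρ (ℓ, i)) k) := by
    intro k
    rw [toO_sgSum, hγdef, Finset.sum_image (fun a _ b _ h => eρ.injective h),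
      Finset.sum_product]
  have wvar : ∀ (k : Fin n₂) ℓ, ℓ ∈ β → l k ℓ = k := by
    intro k ℓ hℓ
    have h0 : l.idxFun ℓ = none := by simpa [hβdef] using hℓ
    simp [Combinatorics.Line.coe_apply, h0]
  have wfix : ∀ (k k' : Fin n₂) ℓ, ℓ ∉ β → l k ℓ = l k' ℓ := by
    intro k k' ℓ hℓ
    have h0 : l.idxFun ℓ ≠ none := by simpa [hβdef] using hℓ
    obtain ⟨u, hu⟩ := Option.ne_none_iff_exists'.mp h0
    simp [Combinatorics.Line.coe_apply, hu]
  have decomp : ∀ (j : Fin n₁) (w : ι → Fin n₂),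
      toO (s + sgSum α (fun i => Mc i (eN.symm (j, w))) hα)
        = ((toO s + ∑ i ∈ α, toO (Q i j))
            + ∑ ℓ ∈ Finset.univ \ β, ∑ i ∈ α, toO (C (eρ (ℓ, i)) (w ℓ)))
            + ∑ ℓ ∈ β, ∑ i ∈ α, toO (C (eρ (ℓ, i)) (w ℓ)) := by
    intro j w
    rw [toO_add, toO_sgSum]
    have hcongr : ∀ i ∈ α, toO (Mc i (eN.symm (j, w)))
        = toO (Q i j) + ∑ ℓ : ι, toO (C (eρ (ℓ, i)) (w ℓ)) := by
      intro i _
      rw [entry i (eN.symm (j, w))]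
      simp only [Equiv.apply_symm_apply]
    rw [Finset.sum_congr rfl hcongr, Finset.sum_add_distrib, Finset.sum_comm]
    rw [← Finset.sum_sdiff (Finset.subset_univ β)]
    abel
  -- every color j belongs to the common color class
  have hfull : ∀ j : Fin n₁,
      s + sgSum α (fun i => Mc i (eN.symm (j, ⇑l k₀))) hα ∈ A₁ := by
    intro j
    obtain ⟨s', hs'⟩ := exists_toO_add s
      ((∑ i ∈ α, toO (Q i j))
        + ∑ ℓ ∈ Finset.univ \ β, ∑ i ∈ α, toO (C (eρ (ℓ, i)) (l k₀ ℓ)))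
    obtain ⟨k, hk⟩ := hC γ hγ s'
    have hid : s' + sgSum γ (fun i => C i k) hγ
        = s + sgSum α (fun i => Mc i (eN.symm (j, ⇑l k))) hα := by
      apply toO_inj
      rw [toO_add, hγsum, ← hs', decomp]
      have e1 : ∑ ℓ ∈ Finset.univ \ β, ∑ i ∈ α, toO (C (eρ (ℓ, i)) (l k₀ ℓ))
          = ∑ ℓ ∈ Finset.univ \ β, ∑ i ∈ α, toO (C (eρ (ℓ, i)) (l k ℓ)) := by
        refine Finset.sum_congr rfl fun ℓ hℓ => ?_
        rw [wfix k₀ k ℓ (Finset.mem_sdiff.mp hℓ).2]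
      have e2 : ∑ ℓ ∈ β, ∑ i ∈ α, toO (C (eρ (ℓ, i)) k)
          = ∑ ℓ ∈ β, ∑ i ∈ α, toO (C (eρ (ℓ, i)) (l k ℓ)) := by
        refine Finset.sum_congr rfl fun ℓ hℓ => ?_
        rw [wvar k ℓ hℓ]
      rw [e1, e2]
      abel
    have hmemA : s' + sgSum γ (fun i => C i k) hγ ∈ A := by
      rw [hid]; exact hs _
    have hmemA₁ : s' + sgSum γ (fun i => C i k) hγ ∈ A₁ := by
      rw [hunion] at hmemA
      rcases hmemA with h | h
      · exact h
      · exact absurd h hk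
    have hjk : j ∈ Finset.univ.filter
        (fun j => s + sgSum α (fun i => Mc i (eN.symm (j, ⇑l k))) hα ∈ A₁) := by
      simp only [Finset.mem_filter, Finset.mem_univ, true_and]
      rw [← hid]; exact hmemA₁
    have h1 := hσ k
    have h2 := hσ k₀
    simp only at h1 h2
    rw [h1] at hjk
    rw [← h2] at hjk
    exact (Finset.mem_filter.mp hjk).2
  -- conclude
  obtain ⟨sF, hsF⟩ := exists_toO_add s
    ((∑ ℓ ∈ Finset.univ \ β, ∑ i ∈ α, toO (C (eρ (ℓ, i)) (l k₀ ℓ)))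
      + ∑ ℓ ∈ β, ∑ i ∈ α, toO (C (eρ (ℓ, i)) (l k₀ ℓ)))
  refine ⟨α, hα, sF, fun j => ?_⟩
  have key : sF + sgSum α (fun i => Q i j) hα
      = s + sgSum α (fun i => Mc i (eN.symm (j, ⇑l k₀))) hα := by
    apply toO_inj
    rw [toO_add, toO_sgSum, ← hsF, decomp]
    abel
  rw [key]
  exact hfull j
end

section
/- The class of CR-sets is translation invariant: if A ⊆ S is a CR-set in a commutative semigroup (S,+) and t ∈ S, then -t + A = {x ∈ S : t + x ∈ A} is a CR-set, and also t + A is a CR-set. -/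
lemma iterAdd_add_right {S : Type*} [AddCommSemigroup S] (a b c : S) :
    ∀ k, iterAdd a b k + c = iterAdd (a + c) b k
  | 0 => rfl
  | k + 1 => by
    rw [iterAdd, iterAdd, add_right_comm, iterAdd_add_right a b c k]

lemma foldl_const_add {ι S : Type*} [AddCommSemigroup S] (f : ι → S) (t : S) :
    ∀ (l : List ι) (b : S) (k : ℕ),
      l.foldl (fun x i => x + (t + f i)) (iterAdd b t k) =
        iterAdd (l.foldl (fun x i => x + f i) b) t (k + l.length)
  | [], b, k => rfl
  | i :: l, b, k => by
    have h1 : iterAdd b t k + (t + f i) = iterAdd (b + f i) t (k + 1) := by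
      rw [← add_assoc]; exact iterAdd_add_right b t (f i) (k + 1)
    simp only [List.foldl_cons, h1, foldl_const_add f t l (b + f i) (k + 1),
      List.length_cons]
    ring_nf

lemma sgSum_const_add {ι S : Type*} [LinearOrder ι] [AddCommSemigroup S]
    (α : Finset ι) (f : ι → S) (t : S) (h : α.Nonempty) :
    sgSum α (fun i => t + f i) h = iterAdd (sgSum α f h) t α.card := by
  unfold sgSum
  beta_reduce
  have hinit : t + f (α.min' h) = iterAdd (f (α.min' h)) t 1 := by
    show _ = f (α.min' h) + t; exact add_comm _ _
  rw [hinit, foldl_const_add]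
  congr 1
  have hlen : ((α.erase (α.min' h)).sort (· ≤ ·)).length = (α.erase (α.min' h)).card :=
    Finset.length_sort _
  rw [hlen, Finset.card_erase_of_mem (α.min'_mem h)]
  have : 1 ≤ α.card := Finset.card_pos.mpr h
  omega

lemma iterAdd_shift {S : Type*} [AddCommSemigroup S] (s y t : S) :
    ∀ n, s + iterAdd y t (n + 1) = t + (iterAdd s t n + y)
  | 0 => by
    show s + (y + t) = t + (s + y)
    rw [add_comm y t, ← add_assoc, add_comm s t, add_assoc]
  | n + 1 => by
    show s + (iterAdd y t (n + 1) + t) = t + (iterAdd s t n + t + y)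
    rw [← add_assoc, iterAdd_shift s y t n, add_assoc, add_right_comm (iterAdd s t n) t y,
      ← add_assoc]

/-- CR-sets are translation invariant: both `-t + A` and `t + A` are CR-sets. -/
theorem cRSet_translation_invariant {S : Type*} [AddCommSemigroup S]
    (A : Set S) (hA : CRSet A) (t : S) :
    CRSet {x : S | t + x ∈ A} ∧ CRSet ((t + ·) '' A) := by
  constructor
  · intro n
    obtain ⟨r, hr⟩ := hA n
    refine ⟨r, fun M => ?_⟩
    obtain ⟨α, hα, s, hs⟩ := hr (fun i j => t + M i j)
    refine ⟨α, hα, iterAdd s t (α.card - 1), fun j => ?_⟩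
    have hcard : α.card = (α.card - 1) + 1 := by
      have : 1 ≤ α.card := Finset.card_pos.mpr hα
      omega
    have := hs j
    rw [sgSum_const_add, hcard, iterAdd_shift] at this
    exact this
  · intro n
    obtain ⟨r, hr⟩ := hA n
    refine ⟨r, fun M => ?_⟩
    obtain ⟨α, hα, s, hs⟩ := hr M
    exact ⟨α, hα, t + s, fun j => ⟨s + sgSum α (fun i => M i j) hα, hs j, (add_assoc _ _ _).symm⟩⟩
end

section
/- Main theorem: Let (S,+) be a commutative semigroup, let A ⊆ S be a CR-set, and let l ∈ ℕ. Then the set C = {(a,b) ∈ S × S : a + kb ∈ A for all k ∈ {0,1,…,l}} is a CR-set in the product semigroup (S × S, +) (with coordinatewise addition). -/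
section Aux

variable {ι S : Type*} [LinearOrder ι] [AddCommSemigroup S]

private lemma foldl_add' (L : List ι) (a b : S) (f g : ι → S) :
    L.foldl (fun x i => x + (f i + g i)) (a + b)
      = L.foldl (fun x i => x + f i) a + L.foldl (fun x i => x + g i) b := by
  induction L generalizing a b with
  | nil => rfl
  | cons i L ih =>
    simp only [List.foldl_cons]
    rw [add_add_add_comm, ih]

private lemma sgSum_add' (α : Finset ι) (f g : ι → S) (h : α.Nonempty) :
    sgSum α (fun i => f i + g i) h = sgSum α f h + sgSum α g h := by
  unfold sgSum
  exact foldl_add' _ _ _ f g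

private lemma foldl_prod' {T : Type*} [AddCommSemigroup T]
    (L : List ι) (a : S × T) (F : ι → S × T) :
    L.foldl (fun x i => x + F i) a
      = (L.foldl (fun x i => x + (F i).1) a.1,
         L.foldl (fun x i => x + (F i).2) a.2) := by
  induction L generalizing a with
  | nil => rfl
  | cons i L ih =>
    simp only [List.foldl_cons]
    rw [ih]
    rfl

private lemma sgSum_prod' {T : Type*} [AddCommSemigroup T]
    (α : Finset ι) (F : ι → S × T) (h : α.Nonempty) :
    sgSum α F h = (sgSum α (fun i => (F i).1) h, sgSum α (fun i => (F i).2) h) := by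
  unfold sgSum
  exact foldl_prod' _ _ F

private lemma iterAdd_left' (a x b : S) (k : ℕ) :
    iterAdd (a + x) b k = a + iterAdd x b k := by
  induction k with
  | zero => rfl
  | succ k ih => simp only [iterAdd, ih, add_assoc]

private lemma sgSum_iterAdd' (α : Finset ι) (f g : ι → S) (h : α.Nonempty) (k : ℕ) :
    sgSum α (fun i => iterAdd (f i) (g i) k) h
      = iterAdd (sgSum α f h) (sgSum α g h) k := by
  induction k with
  | zero => rfl
  | succ k ih =>
    show sgSum α (fun i => iterAdd (f i) (g i) k + g i) h = _
    rw [sgSum_add' α (fun i => iterAdd (f i) (g i) k) g h, ih]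
    rfl

end Aux

/-- Main theorem: if `A` is a CR-set in a commutative semigroup `S` and `l ∈ ℕ`,
then `{(a,b) : a + k•b ∈ A for all k ∈ {0,…,l}}` is a CR-set in `S × S`. -/
theorem cRSet_abundance_AP {S : Type*} [AddCommSemigroup S] (A : Set S)
    (hA : CRSet A) (l : ℕ) :
    CRSet {p : S × S | ∀ k : ℕ, k ≤ l → iterAdd p.1 p.2 k ∈ A} := by
  intro n
  rcases Nat.eq_zero_or_pos n with hn | hn
  · subst hn
    obtain ⟨r, hr⟩ := hA 0
    obtain ⟨α, hα, s, -⟩ := hr (fun _ j => j.elim0)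
    exact ⟨r, fun M => ⟨α, hα, (s, s), fun j => j.elim0⟩⟩
  · obtain ⟨r, hr⟩ := hA (n * (l + 1))
    refine ⟨r, fun M => ?_⟩
    have hl : 0 < l + 1 := Nat.succ_pos l
    set j0 : Fin n := ⟨0, hn⟩ with hj0
    have hcol : ∀ c : Fin (n * (l + 1)), c.val / (l + 1) < n := by
      intro c
      exact Nat.div_lt_of_lt_mul (Nat.mul_comm n (l + 1) ▸ c.isLt)
    set N : Fin r → Fin (n * (l + 1)) → S := fun i c =>
      iterAdd (M i ⟨c.val / (l + 1), hcol c⟩).1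
        ((M i ⟨c.val / (l + 1), hcol c⟩).2 + (M i j0).2) (c.val % (l + 1)) with hN
    obtain ⟨α, hα, s, hs⟩ := hr N
    refine ⟨α, hα, (s, sgSum α (fun i => (M i j0).2) hα), ?_⟩
    intro j
    intro k hk
    have hkl : k < l + 1 := Nat.lt_succ_of_le hk
    have hcv : (l + 1) * j.val + k < n * (l + 1) := by
      calc (l + 1) * j.val + k < (l + 1) * j.val + (l + 1) := by omega
        _ = (l + 1) * (j.val + 1) := by ring
        _ ≤ (l + 1) * n := Nat.mul_le_mul_left _ j.isLt
        _ = n * (l + 1) := Nat.mul_comm _ _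
    set c : Fin (n * (l + 1)) := ⟨(l + 1) * j.val + k, hcv⟩ with hc
    have hdiv : c.val / (l + 1) = j.val := by
      simp [hc, Nat.mul_add_div hl, Nat.div_eq_of_lt hkl]
    have hmod : c.val % (l + 1) = k := by
      simp [hc, Nat.mul_add_mod, Nat.mod_eq_of_lt hkl]
    have hjc : (⟨c.val / (l + 1), hcol c⟩ : Fin n) = j := Fin.ext hdiv
    have hsc := hs c
    have hNc : (fun i => N i c)
        = fun i => iterAdd ((M i j).1) ((M i j).2 + (M i j0).2) k := by
      funext i
      rw [hN]
      simp only [hjc, hmod]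
    rw [hNc, sgSum_iterAdd' α (fun i => (M i j).1)
      (fun i => (M i j).2 + (M i j0).2) hα k,
      sgSum_add' α (fun i => (M i j).2) (fun i => (M i j0).2) hα] at hsc
    -- Now compute the goal
    show iterAdd ((s, sgSum α (fun i => (M i j0).2) hα) + sgSum α (fun i => M i j) hα).1
      ((s, sgSum α (fun i => (M i j0).2) hα) + sgSum α (fun i => M i j) hα).2 k ∈ A
    rw [sgSum_prod' α (fun i => M i j) hα]
    show iterAdd (s + sgSum α (fun i => (M i j).1) hα)
      (sgSum α (fun i => (M i j0).2) hα + sgSum α (fun i => (M i j).2) hα) k ∈ A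
    rw [iterAdd_left', add_comm (sgSum α (fun i => (M i j0).2) hα)]
    exact hsc
end

section
/- If A ⊆ ℕ is a J-set, then for every l ∈ ℕ the set {(a,b) ∈ ℕ × ℕ : a + kb ∈ A for all k ∈ {0,1,…,l}} is a J-set in (ℕ × ℕ, +). -/
lemma foldl_add_eq {ι S : Type*} [AddCommMonoid S] (f : ι → S) :
    ∀ (L : List ι) (b : S), L.foldl (fun x i => x + f i) b = b + (L.map f).sum := by
  intro L
  induction L with
  | nil => simp
  | cons i L ih => intro b; simp [ih, add_assoc]

lemma sgSum_eq_sum {ι S : Type*} [LinearOrder ι] [AddCommMonoid S]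
    (α : Finset ι) (f : ι → S) (h : α.Nonempty) : sgSum α f h = ∑ i ∈ α, f i := by
  unfold sgSum
  rw [foldl_add_eq]
  have hperm : List.Perm (((α.erase (α.min' h)).sort (· ≤ ·)).map f)
      (((α.erase (α.min' h)).toList).map f) :=
    (Finset.sort_perm_toList _ _).map f
  rw [hperm.sum_eq]
  rw [Finset.sum_map_toList]
  exact Finset.add_sum_erase _ f (α.min'_mem h)

/-- If `A ⊆ ℕ` is a J-set, then for every `l` the set
`{(a,b) : a, a+b, …, a+lb ∈ A}` is a J-set in `(ℕ × ℕ, +)`. -/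
theorem jSet_abundance_AP (A : Set ℕ) (hA : JSet A) (l : ℕ) :
    JSet {p : ℕ × ℕ | ∀ k : ℕ, k ≤ l → p.1 + k * p.2 ∈ A} := by
  classical
  intro F
  obtain ⟨a, H, hH, hmem⟩ :=
    hA ((F ×ˢ Finset.range (l + 1)).image (fun p n => (p.1 n).1 + p.2 * (p.1 n).2))
  refine ⟨(a, 0), H, hH, ?_⟩
  intro f hf
  intro k hk
  have hg : (fun n => (f n).1 + k * (f n).2) ∈
      (F ×ˢ Finset.range (l + 1)).image (fun p n => (p.1 n).1 + p.2 * (p.1 n).2) :=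
    Finset.mem_image.mpr ⟨(f, k), Finset.mem_product.mpr ⟨hf, Finset.mem_range.mpr (Nat.lt_succ_of_le hk)⟩, rfl⟩
  have := hmem _ hg
  rw [sgSum_eq_sum] at this
  have h1 : (sgSum H f hH).1 = ∑ n ∈ H, (f n).1 := by
    rw [sgSum_eq_sum]; exact Prod.fst_sum ..
  have h2 : (sgSum H f hH).2 = ∑ n ∈ H, (f n).2 := by
    rw [sgSum_eq_sum]; exact Prod.snd_sum ..
  simp only [Prod.fst_add, Prod.snd_add, h1, h2]
  convert this using 1
  rw [Finset.sum_add_distrib, zero_add, Finset.mul_sum]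
  ring
end

section
/- Let S be a discrete semigroup and F a family of subsets of S with the Ramsey property. Then β(F) = {p ∈ βS : p ⊆ F} is a left ideal of (βS, ·) if and only if F is left shift-invariant (for all s ∈ S and E ∈ F, sE ∈ F). -/
/-- The extension of the semigroup operation of `S` to the ultrafilters `βS`:
`A ∈ p * q` iff `{x : x⁻¹A ∈ q} ∈ p`. -/
noncomputable def umul {S : Type*} [Semigroup S] (p q : Ultrafilter S) :
    Ultrafilter S :=
  p.bind fun x => q.map (x * ·)

/-- For a partition-regular family `F`, every `E ∈ F` lies in some ultrafilter
contained in `F`. -/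
theorem exists_ultrafilter_subset_of_ramsey {S : Type*}
    (F : Set (Set S)) (hmem : ∀ A ∈ F, A.Nonempty)
    (hup : ∀ A ∈ F, ∀ B : Set S, A ⊆ B → B ∈ F)
    (hram : ∀ A ∈ F, ∀ A₁ A₂ : Set S, A = A₁ ∪ A₂ → A₁ ∈ F ∨ A₂ ∈ F)
    {E : Set S} (hE : E ∈ F) :
    ∃ p : Ultrafilter S, E ∈ p ∧ ∀ A : Set S, A ∈ p → A ∈ F := by
  have hSuniv : (Set.univ : Set S) ∈ F := hup E hE _ (Set.subset_univ E)
  have hempty : (∅ : Set S) ∉ F := fun h => by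
    simpa using hmem ∅ h
  let G : Filter S :=
    { sets := {B | Bᶜ ∉ F}
      univ_sets := by simpa using hempty
      sets_of_superset := by
        intro B C hB hBC hC
        exact hB (hup _ hC _ (Set.compl_subset_compl.mpr hBC))
      inter_sets := by
        intro B C hB hC h
        rw [Set.compl_inter] at h
        rcases hram _ h _ _ rfl with h1 | h1
        · exact hB h1
        · exact hC h1 }
  have hGE : (G ⊓ Filter.principal E).NeBot := by
    rw [Filter.inf_principal_neBot_iff]
    intro U hU
    by_contra hc
    rw [Set.not_nonempty_iff_eq_empty] at hc
    have : E ⊆ Uᶜ := by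
      intro x hx
      intro hxU
      exact Set.eq_empty_iff_forall_notMem.mp hc x ⟨hxU, hx⟩
    exact hU (hup E hE _ this)
  obtain ⟨p, hp⟩ := Ultrafilter.exists_le (G ⊓ Filter.principal E)
  refine ⟨p, ?_, ?_⟩
  · exact hp (Filter.mem_inf_of_right (Filter.mem_principal_self E))
  · intro A hA
    by_contra hAF
    have hAc : Aᶜ ∈ G := by
      show Aᶜᶜ ∉ F
      rwa [compl_compl]
    have : Aᶜ ∈ p := hp (Filter.mem_inf_of_left hAc)
    exact (Ultrafilter.compl_notMem_iff.mpr hA) this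

theorem mem_umul_iff {S : Type*} [Semigroup S] (p q : Ultrafilter S) (A : Set S) :
    A ∈ umul p q ↔ {x | (x * ·) ⁻¹' A ∈ q} ∈ p := by
  rfl

/-- For a family `F` with the Ramsey property, `β(F) = {p ∈ βS : p ⊆ F}` is a
left ideal of `βS` iff `F` is left shift-invariant. -/
theorem betaF_leftIdeal_iff_shift_invariant {S : Type*} [Semigroup S]
    (F : Set (Set S)) (hne : F.Nonempty) (hmem : ∀ A ∈ F, A.Nonempty)
    (hup : ∀ A ∈ F, ∀ B : Set S, A ⊆ B → B ∈ F)
    (hram : ∀ A ∈ F, ∀ A₁ A₂ : Set S, A = A₁ ∪ A₂ → A₁ ∈ F ∨ A₂ ∈ F) :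
    ({p : Ultrafilter S | ∀ A : Set S, A ∈ p → A ∈ F}.Nonempty ∧
      ∀ p q : Ultrafilter S, q ∈ {p : Ultrafilter S | ∀ A : Set S, A ∈ p → A ∈ F} →
        umul p q ∈ {p : Ultrafilter S | ∀ A : Set S, A ∈ p → A ∈ F}) ↔
    (∀ s : S, ∀ E ∈ F, (s * ·) '' E ∈ F) := by
  constructor
  · rintro ⟨-, hideal⟩ s E hE
    obtain ⟨q, hEq, hq⟩ := exists_ultrafilter_subset_of_ramsey F hmem hup hram hE
    have h1 : (s * ·) '' E ∈ umul (pure s) q := by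
      rw [mem_umul_iff]
      refine Ultrafilter.mem_pure.mpr ?_
      have : E ⊆ (s * ·) ⁻¹' ((s * ·) '' E) := Set.subset_preimage_image _ _
      exact q.toFilter.mem_of_superset hEq this
    exact hideal (pure s) q hq _ h1
  · intro hshift
    constructor
    · obtain ⟨E, hE⟩ := hne
      obtain ⟨p, _, hp⟩ := exists_ultrafilter_subset_of_ramsey F hmem hup hram hE
      exact ⟨p, hp⟩
    · intro p q hq A hA
      rw [mem_umul_iff] at hA
      obtain ⟨x, hx⟩ := Ultrafilter.nonempty_of_mem hA
      have hEF : (x * ·) ⁻¹' A ∈ F := hq _ hx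
      have := hshift x _ hEF
      exact hup _ this A (Set.image_preimage_subset _ _)
end

section
/- Let S be a semigroup and F a family of subsets of S with the Ramsey property. Then β(F) = {p ∈ βS : p ⊆ F} is a subsemigroup of βS if and only if F has the following property: if E ⊆ S and there exists A ∈ F such that for every finite H ⊆ A one has ⋂_{x∈H} x⁻¹E ∈ F, then E ∈ F. -/
lemma mem_umul {S : Type*} [Semigroup S] {p q : Ultrafilter S} {B : Set S} :
    B ∈ umul p q ↔ {x : S | (x * ·) ⁻¹' B ∈ q} ∈ p := by
  have h : B ∈ umul p q ↔ B ∈ Filter.bind ↑p fun x => ↑(q.map (x * ·)) := Iff.rfl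
  rw [h, Filter.mem_bind']
  rfl

/-- Key extension lemma: any "filter-like" subfamily of a partition-regular
family `F` extends to an ultrafilter contained in `F`. -/
lemma exists_ultrafilter_subset {S : Type*}
    (F : Set (Set S)) (hmem : ∀ A ∈ F, A.Nonempty)
    (hup : ∀ A ∈ F, ∀ B : Set S, A ⊆ B → B ∈ F)
    (hram : ∀ A ∈ F, ∀ A₁ A₂ : Set S, A = A₁ ∪ A₂ → A₁ ∈ F ∨ A₂ ∈ F)
    (G : Set (Set S)) (hGne : G.Nonempty) (hGF : G ⊆ F)
    (hGint : ∀ B ∈ G, ∀ C ∈ G, B ∩ C ∈ G) :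
    ∃ p : Ultrafilter S, G ⊆ {B | B ∈ p} ∧ ∀ B ∈ p, B ∈ F := by
  classical
  -- candidates: filter-like families between G and F
  set 𝒞 : Set (Set (Set S)) :=
    {T | G ⊆ T ∧ T ⊆ F ∧ (∀ B ∈ T, ∀ C : Set S, B ⊆ C → C ∈ T) ∧
      ∀ B ∈ T, ∀ C ∈ T, B ∩ C ∈ T} with h𝒞
  have hG' : {C : Set S | ∃ B ∈ G, B ⊆ C} ∈ 𝒞 := by
    refine ⟨fun B hB => ⟨B, hB, subset_rfl⟩, ?_, ?_, ?_⟩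
    · rintro C ⟨B, hB, hBC⟩; exact hup B (hGF hB) C hBC
    · rintro B ⟨B₀, hB₀, h₀⟩ C hBC; exact ⟨B₀, hB₀, h₀.trans hBC⟩
    · rintro B ⟨B₀, hB₀, h₀⟩ C ⟨C₀, hC₀, h₀'⟩
      exact ⟨B₀ ∩ C₀, hGint B₀ hB₀ C₀ hC₀, Set.inter_subset_inter h₀ h₀'⟩
  obtain ⟨T, hGT, hTmax⟩ := zorn_subset_nonempty 𝒞 (fun c hc hchain hcne => by
    obtain ⟨t₀, ht₀⟩ := hcne
    refine ⟨⋃₀ c, ⟨?_, ?_, ?_, ?_⟩, fun s hs => Set.subset_sUnion_of_mem hs⟩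
    · exact fun B hB => ⟨t₀, ht₀, (hc ht₀).1 hB⟩
    · rintro B ⟨t, ht, hBt⟩; exact (hc ht).2.1 hBt
    · rintro B ⟨t, ht, hBt⟩ C hBC; exact ⟨t, ht, (hc ht).2.2.1 B hBt C hBC⟩
    · rintro B ⟨t, ht, hBt⟩ C ⟨t', ht', hCt'⟩
      rcases hchain.total ht ht' with h | h
      · exact ⟨t', ht', (hc ht').2.2.2 B (h hBt) C hCt'⟩
      · exact ⟨t, ht, (hc ht).2.2.2 B hBt C (h hCt')⟩)
    _ hG'
  obtain ⟨hGT', hTF, hTup, hTint⟩ := hTmax.prop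
  have hTne : T.Nonempty := ⟨_, hGT ⟨hGne.choose, hGne.choose_spec, subset_rfl⟩⟩
  have huniv : Set.univ ∈ T := hTup _ hTne.choose_spec _ (Set.subset_univ _)
  have hempty : ∅ ∉ T := fun h => (hmem _ (hTF h)).ne_empty rfl
  -- maximality gives completeness
  have hcomp : ∀ B : Set S, B ∈ T ∨ Bᶜ ∈ T := by
    intro B
    by_contra hcon
    push_neg at hcon
    obtain ⟨hB, hBc⟩ := hcon
    have key : ∀ B : Set S, B ∉ T → ∃ D ∈ T, D ∩ B ∉ F := by
      intro B hB
      by_contra hk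
      push_neg at hk
      have : {C : Set S | ∃ D ∈ T, D ∩ B ⊆ C} ∈ 𝒞 := by
        refine ⟨fun C hC => ⟨C, hGT' hC, Set.inter_subset_left⟩, ?_, ?_, ?_⟩
        · rintro C ⟨D, hD, hDC⟩; exact hup _ (hk D hD) C hDC
        · rintro C ⟨D, hD, hDC⟩ C' hCC'; exact ⟨D, hD, hDC.trans hCC'⟩
        · rintro C ⟨D, hD, hDC⟩ C' ⟨D', hD', hDC'⟩
          refine ⟨D ∩ D', hTint D hD D' hD', fun y hy => ⟨hDC ⟨hy.1.1, hy.2⟩, hDC' ⟨hy.1.2, hy.2⟩⟩⟩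
      have hsub : T ⊆ {C : Set S | ∃ D ∈ T, D ∩ B ⊆ C} :=
        fun C hC => ⟨C, hC, Set.inter_subset_left⟩
      exact hB (hTmax.2 this hsub ⟨Set.univ, huniv, Set.inter_subset_right⟩)
    obtain ⟨D₁, hD₁, hD₁F⟩ := key B hB
    obtain ⟨D₂, hD₂, hD₂F⟩ := key Bᶜ hBc
    have hD : D₁ ∩ D₂ ∈ F := hTF (hTint _ hD₁ _ hD₂)
    have : D₁ ∩ D₂ = (D₁ ∩ D₂ ∩ B) ∪ (D₁ ∩ D₂ ∩ Bᶜ) := by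
      rw [← Set.inter_union_distrib_left, Set.union_compl_self, Set.inter_univ]
    rcases hram _ hD _ _ this with h | h
    · exact hD₁F (hup _ h _ (fun y hy => ⟨hy.1.1, hy.2⟩))
    · exact hD₂F (hup _ h _ (fun y hy => ⟨hy.1.2, hy.2⟩))
  -- build the ultrafilter
  let f : Filter S :=
    { sets := T
      univ_sets := huniv
      sets_of_superset := fun h h' => hTup _ h _ h'
      inter_sets := fun h h' => hTint _ h _ h' }
  have hmemf : ∀ B : Set S, B ∈ f ↔ B ∈ T := fun _ => Iff.rfl
  refine ⟨Ultrafilter.ofComplNotMemIff f (fun s => ?_), fun B hB => hGT' hB, fun B hB => hTF hB⟩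
  constructor
  · intro h
    rcases hcomp s with h' | h'
    · exact h'
    · exact absurd h' h
  · intro hs hsc
    exact hempty (by simpa using hTint _ hs _ hsc)

/-- For a family `F` with the Ramsey property, `β(F) = {p ∈ βS : p ⊆ F}` is a
subsemigroup of `βS` iff: whenever `E ⊆ S` and there is `A ∈ F` such that
`⋂_{x ∈ H} x⁻¹E ∈ F` for every finite `H ⊆ A`, then `E ∈ F`. -/
theorem betaF_subsemigroup_iff {S : Type*} [Semigroup S]
    (F : Set (Set S)) (hne : F.Nonempty) (hmem : ∀ A ∈ F, A.Nonempty)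
    (hup : ∀ A ∈ F, ∀ B : Set S, A ⊆ B → B ∈ F)
    (hram : ∀ A ∈ F, ∀ A₁ A₂ : Set S, A = A₁ ∪ A₂ → A₁ ∈ F ∨ A₂ ∈ F) :
    (∀ p q : Ultrafilter S,
        p ∈ {p : Ultrafilter S | ∀ A : Set S, A ∈ p → A ∈ F} →
        q ∈ {p : Ultrafilter S | ∀ A : Set S, A ∈ p → A ∈ F} →
        umul p q ∈ {p : Ultrafilter S | ∀ A : Set S, A ∈ p → A ∈ F}) ↔
    (∀ E : Set S,
        (∃ A ∈ F, ∀ H : Finset S, ↑H ⊆ A → {y : S | ∀ x ∈ H, x * y ∈ E} ∈ F) →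
        E ∈ F) := by
  classical
  constructor
  · -- closed under umul → combinatorial property
    rintro hclosed E ⟨A, hA, hH⟩
    -- q : ultrafilter containing all D_H, contained in F
    set G : Set (Set S) := {D | ∃ H : Finset S, ↑H ⊆ A ∧ D = {y : S | ∀ x ∈ H, x * y ∈ E}}
      with hGdef
    obtain ⟨q, hGq, hqF⟩ := exists_ultrafilter_subset F hmem hup hram G
      ⟨{y : S | ∀ x ∈ (∅ : Finset S), x * y ∈ E}, ∅, by simp, rfl⟩
      (by rintro D ⟨H, hHA, rfl⟩; exact hH H hHA)
      (by rintro B ⟨H, hHA, rfl⟩ C ⟨K, hKA, rfl⟩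
          refine ⟨H ∪ K, ?_, ?_⟩
          · rw [Finset.coe_union]; exact Set.union_subset hHA hKA
          · ext y
            constructor
            · rintro ⟨h₁, h₂⟩ x hx
              rcases Finset.mem_union.1 hx with h | h
              · exact h₁ x h
              · exact h₂ x h
            · intro h
              exact ⟨fun x hx => h x (Finset.mem_union_left _ hx),
                fun x hx => h x (Finset.mem_union_right _ hx)⟩)
    -- p : ultrafilter containing A, contained in F
    obtain ⟨p, hAp, hpF⟩ := exists_ultrafilter_subset F hmem hup hram {A}
      ⟨A, rfl⟩ (by simpa using hA) (by rintro B rfl C rfl; simpa using rfl)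
    have hpq := hclosed p q hpF hqF
    apply hpq
    rw [mem_umul]
    refine p.mem_of_superset (hAp rfl) fun x hx => ?_
    have : {y : S | ∀ z ∈ ({x} : Finset S), z * y ∈ E} ∈ q :=
      hGq ⟨{x}, by simpa using hx, rfl⟩
    refine q.mem_of_superset this fun y hy => ?_
    exact hy x (Finset.mem_singleton_self x)
  · -- combinatorial property → closed under umul
    rintro hprop p q hp hq B hB
    rw [mem_umul] at hB
    refine hprop B ⟨{x : S | (x * ·) ⁻¹' B ∈ q}, hp _ hB, fun H hHA => ?_⟩
    apply hq
    have : {y : S | ∀ x ∈ H, x * y ∈ B} = ⋂ x ∈ H, (x * ·) ⁻¹' B := by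
      ext y; simp [Set.mem_iInter]
    rw [this, ← Ultrafilter.mem_coe, Filter.biInter_finset_mem]
    intro x hx
    exact hHA hx
end

section
/- Every piecewise syndetic subset of a commutative semigroup is the intersection of a thick set and a syndetic set. -/
/-- Every piecewise syndetic subset of a commutative semigroup is the
intersection of a thick set and a syndetic set. -/
theorem piecewiseSyndetic_eq_thick_inter_syndetic {S : Type*}
    [AddCommSemigroup S] (A : Set S) (hA : PiecewiseSyndetic A) :
    ∃ T B : Set S, Thick T ∧ Syndetic B ∧ A = T ∩ B := by
  obtain ⟨F, hF⟩ := hA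
  set C : Set S := {x | ∃ t ∈ F, t + x ∈ A} with hC
  refine ⟨A ∪ C, A ∪ Cᶜ, ?_, ?_, ?_⟩
  · intro E
    obtain ⟨x, hx⟩ := hF E
    exact ⟨x, fun e he => Or.inr (hx e he)⟩
  · obtain ⟨x0⟩ : Nonempty S := by
      obtain ⟨x, -⟩ := hF ∅; exact ⟨x⟩
    obtain ⟨t0, ht0⟩ : F.Nonempty := by
      by_contra h
      rw [Finset.not_nonempty_iff_eq_empty] at h
      obtain ⟨x, hx⟩ := hF {x0}
      obtain ⟨t, ht, -⟩ := hx x0 (Finset.mem_singleton_self x0)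
      simp [h] at ht
    classical
    refine ⟨insert t0 (F.image (· + t0)), fun x => ?_⟩
    by_cases h1 : t0 + x ∈ A
    · exact ⟨t0, Finset.mem_insert_self _ _, Or.inl h1⟩
    by_cases h2 : t0 + x ∈ C
    · obtain ⟨t, htF, hta⟩ := h2
      refine ⟨t + t0, Finset.mem_insert_of_mem (Finset.mem_image_of_mem _ htF), Or.inl ?_⟩
      rwa [add_assoc]
    · exact ⟨t0, Finset.mem_insert_self _ _, Or.inr h2⟩
  · ext x
    constructor
    · intro hx; exact ⟨Or.inl hx, Or.inl hx⟩
    · rintro ⟨h1, h2⟩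
      rcases h2 with h2 | h2
      · exact h2
      · rcases h1 with h1 | h1
        · exact h1
        · exact absurd h1 h2
end
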